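/- arXiv:2109.05254 — 2 statements merged into one kernel-verified Lean document; each statement's English description precedes it below -/
import Mathlib

section
/- For any a, b, v₁ ∈ ℝ, let u(s) = −log(cosh(s + a)) + b for s ∈ ℝ. Then 1 − u'(s)² > 0 for all s, and the cylindrical surface X(s,t) = (t, s, u(s)) satisfies the translating soliton equation with respect to v = (v₁, 0, 1) at every point of ℝ² (a Lorentzian grim reaper with spacelike rulings; equivalently, u solves u'' = u'² − 1). -/
noncomputable section

/-- The Lorentzian (Minkowski) inner product on ℝ³:
`⟨a,b⟩ = a₁b₁ + a₂b₂ − a₃b₃`. -/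
def mink (a b : Fin 3 → ℝ) : ℝ := a 0 * b 0 + a 1 * b 1 - a 2 * b 2

/-- Determinant of the 3×3 matrix with rows `a`, `b`, `c`. -/
def det3 (a b c : Fin 3 → ℝ) : ℝ :=
  a 0 * (b 1 * c 2 - b 2 * c 1) - a 1 * (b 0 * c 2 - b 2 * c 0)
    + a 2 * (b 0 * c 1 - b 1 * c 0)

/-- Partial derivative `X_s` of a parametrized surface `X(s,t)`. -/
def pS (X : ℝ → ℝ → Fin 3 → ℝ) (s t : ℝ) : Fin 3 → ℝ := deriv (fun a => X a t) s

/-- Partial derivative `X_t`. -/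
def pT (X : ℝ → ℝ → Fin 3 → ℝ) (s t : ℝ) : Fin 3 → ℝ := deriv (fun b => X s b) t

/-- Second partial derivative `X_ss`. -/
def pSS (X : ℝ → ℝ → Fin 3 → ℝ) (s t : ℝ) : Fin 3 → ℝ := deriv (fun a => pS X a t) s

/-- Mixed second partial derivative `X_st`. -/
def pST (X : ℝ → ℝ → Fin 3 → ℝ) (s t : ℝ) : Fin 3 → ℝ := deriv (fun a => pT X a t) s

/-- Second partial derivative `X_tt`. -/
def pTT (X : ℝ → ℝ → Fin 3 → ℝ) (s t : ℝ) : Fin 3 → ℝ := deriv (fun b => pT X s b) t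

/-- Coefficient `E = ⟨X_s, X_s⟩` of the first fundamental form. -/
def coefE (X : ℝ → ℝ → Fin 3 → ℝ) (s t : ℝ) : ℝ := mink (pS X s t) (pS X s t)

/-- Coefficient `F = ⟨X_s, X_t⟩` of the first fundamental form. -/
def coefF (X : ℝ → ℝ → Fin 3 → ℝ) (s t : ℝ) : ℝ := mink (pS X s t) (pT X s t)

/-- Coefficient `G = ⟨X_t, X_t⟩` of the first fundamental form. -/
def coefG (X : ℝ → ℝ → Fin 3 → ℝ) (s t : ℝ) : ℝ := mink (pT X s t) (pT X s t)

/-- `EG − F²` at `(s,t)`. -/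
def disc (X : ℝ → ℝ → Fin 3 → ℝ) (s t : ℝ) : ℝ :=
  coefE X s t * coefG X s t - coefF X s t ^ 2

/-- The translating soliton equation with respect to the velocity `v` at the point `(s,t)`:
`E·det(X_s,X_t,X_tt) − 2F·det(X_s,X_t,X_st) + G·det(X_s,X_t,X_ss)
  = −|EG − F²|·det(X_s,X_t,v)`. -/
def SolitonEqAt (X : ℝ → ℝ → Fin 3 → ℝ) (v : Fin 3 → ℝ) (s t : ℝ) : Prop :=
  coefE X s t * det3 (pS X s t) (pT X s t) (pTT X s t)
    - 2 * coefF X s t * det3 (pS X s t) (pT X s t) (pST X s t)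
    + coefG X s t * det3 (pS X s t) (pT X s t) (pSS X s t)
  = -|disc X s t| * det3 (pS X s t) (pT X s t) v

/-! The derivative `u' = -tanh (s + a)` satisfies `u'' = u'² - 1` because `tanh' = 1 - tanh²`, and
`|tanh| < 1` makes the cylinder over `u` spacelike. For any cylinder `X(s,t) = (t, s, u(s))` one
has `X_s = (0, 1, u')`, `X_t = (1, 0, 0)`, `X_ss = (0, 0, u'')` and `X_st = X_tt = 0`, so `F = 0`,
`G = 1`, and the soliton equation with `v = (v₁, 0, 1)` collapses to `u'' = -|1 - u'²|`. -/

open Real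

theorem Real.hasDerivAt_tanh (x : ℝ) : HasDerivAt tanh (1 - tanh x ^ 2) x := by
  have h := (hasDerivAt_sinh x).div (hasDerivAt_cosh x) (cosh_pos x).ne'
  rw [show sinh / cosh = tanh from funext fun y => (tanh_eq_sinh_div_cosh y).symm] at h
  refine h.congr_deriv ?_
  have hcosh : cosh x ≠ 0 := (cosh_pos x).ne'
  rw [tanh_eq_sinh_div_cosh]
  field_simp

theorem hasDerivAt_neg_log_cosh_add (a b s : ℝ) :
    HasDerivAt (fun s => -log (cosh (s + a)) + b) (-tanh (s + a)) s := by
  have h := (((hasDerivAt_cosh (s + a)).comp_add_const s a).log (cosh_pos _).ne').neg.add_const b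
  simpa [tanh_eq_sinh_div_cosh] using h

theorem hasDerivAt_vec3 {𝕜 : Type*} [NontriviallyNormedField 𝕜] {f g h : 𝕜 → 𝕜}
    {f' g' h' x : 𝕜}
    (hf : HasDerivAt f f' x) (hg : HasDerivAt g g' x) (hh : HasDerivAt h h' x) :
    HasDerivAt (fun x => ![f x, g x, h x]) ![f', g', h'] x := by
  rw [hasDerivAt_pi]
  intro i
  fin_cases i <;> simpa

def cylinder (u : ℝ → ℝ) : ℝ → ℝ → Fin 3 → ℝ := fun s t => ![t, s, u s]

section Cylinder

variable {u : ℝ → ℝ}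

theorem pS_cylinder (hu : Differentiable ℝ u) (s t : ℝ) :
    pS (cylinder u) s t = ![0, 1, deriv u s] :=
  (hasDerivAt_vec3 (hasDerivAt_const s t) (hasDerivAt_id s) (hu s).hasDerivAt).deriv

theorem pT_cylinder (s t : ℝ) : pT (cylinder u) s t = ![1, 0, 0] :=
  (hasDerivAt_vec3 (hasDerivAt_id t) (hasDerivAt_const t s) (hasDerivAt_const t (u s))).deriv

theorem pSS_cylinder (hu : Differentiable ℝ u) {s : ℝ} (hu' : DifferentiableAt ℝ (deriv u) s)
    (t : ℝ) : pSS (cylinder u) s t = ![0, 0, deriv (deriv u) s] := by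
  rw [pSS, funext fun a => pS_cylinder hu a t]
  exact (hasDerivAt_vec3 (hasDerivAt_const s 0) (hasDerivAt_const s 1) hu'.hasDerivAt).deriv

theorem pST_cylinder (s t : ℝ) : pST (cylinder u) s t = 0 := by
  simp only [pST, pT_cylinder, deriv_const]

theorem pTT_cylinder (s t : ℝ) : pTT (cylinder u) s t = 0 := by
  simp only [pTT, pT_cylinder, deriv_const]

theorem solitonEqAt_cylinder_iff (hu : Differentiable ℝ u) {s : ℝ}
    (hu' : DifferentiableAt ℝ (deriv u) s) (v₁ t : ℝ) :
    SolitonEqAt (cylinder u) ![v₁, 0, 1] s t ↔ deriv (deriv u) s = -|1 - deriv u s ^ 2| := by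
  simp only [SolitonEqAt, disc, coefE, coefF, coefG, mink, det3, pS_cylinder hu,
    pT_cylinder, pSS_cylinder hu hu', pST_cylinder, pTT_cylinder]
  simp [sq, neg_eq_iff_eq_neg]

end Cylinder

/-- The Lorentzian grim reaper `u(s) = −log cosh(s+a) + b` satisfies
`1 − u'² > 0` and `u'' = u'² − 1` everywhere, and the cylindrical surface
`X(s,t) = (t, s, u(s))` is a translating soliton with respect to `v = (v₁,0,1)`. -/
theorem stmt5 (a b v₁ : ℝ) (u : ℝ → ℝ)
    (hu : u = fun s => -Real.log (Real.cosh (s + a)) + b) :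
    (∀ s : ℝ, 1 - (deriv u s) ^ 2 > 0) ∧
    (∀ s : ℝ, deriv (deriv u) s = (deriv u s) ^ 2 - 1) ∧
    (∀ s t : ℝ, SolitonEqAt (fun s t => ![t, s, u s]) ![v₁, 0, 1] s t) := by
  have hu_deriv : ∀ s, HasDerivAt u (-tanh (s + a)) s :=
    fun s => hu ▸ hasDerivAt_neg_log_cosh_add a b s
  have hu' : deriv u = fun s => -tanh (s + a) := funext fun s => (hu_deriv s).deriv
  have hu'' : ∀ s, HasDerivAt (deriv u) (deriv u s ^ 2 - 1) s := fun s => by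
    rw [hu']
    exact ((hasDerivAt_tanh (s + a)).comp_add_const s a).neg.congr_deriv (by ring)
  have hspacelike : ∀ s, 1 - deriv u s ^ 2 > 0 := fun s => by
    simpa [hu'] using tanh_sq_lt_one (s + a)
  refine ⟨hspacelike, fun s => (hu'' s).deriv, fun s t => ?_⟩
  refine (solitonEqAt_cylinder_iff (fun s => (hu_deriv s).differentiableAt)
    (hu'' s).differentiableAt v₁ t).mpr ?_
  rw [(hu'' s).deriv, abs_of_pos (hspacelike s)]
  ring
end
end

section
/- (Theorem 4, case v = (1,v₂,v₂), ε = −1, arctan branch with a = −1, p = 1: explicit non-cylindrical ruled translating soliton.) Fix v₂, b ∈ ℝ, write φ(s) = s − v₂, and define for s ∈ ℝ: Φ(s) = arctan(φ(s)), x(s) = −(1/2)·log(1 + φ(s)²) − v₂·arctan(φ(s)), z(s) = −(v₂²/2)·arctan(φ(s)) − (v₂/2)·log(1 + φ(s)²) + b·s, and γ(s) = (x(s), z(s) + Φ(s), z(s)). Then X(s,t) = γ(s) + t·(1, s, s) satisfies ⟨γ'(s), (1,s,s)⟩ = 0, and at every point (s,t) with ⟨X_s, X_s⟩ > 0, X is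 non-degenerate with EG − F² = ⟨X_s,X_s⟩ > 0 and satisfies the translating soliton equation with respect to v = (1, v₂, v₂). -/
noncomputable section

/-
The ruling `w(s) = (1,s,s)` is a unit spacelike vector whose derivative `(0,1,1)` is null and
orthogonal to `w`, and `x' = -s·Φ'` makes `γ'` orthogonal to `w`. Hence `F = 0`, `G = 1` and
`EG - F² = E`; since moreover `X_tt = 0`, the soliton equation reduces to
`det(X_s, w, X_ss) = -E·det(X_s, w, v)`, which after computing `γ'` and `γ''` is an identity
between rational functions of `s` (linear in `t`).
-/

open Real

theorem HasDerivAt.vec3 {f g h : ℝ → ℝ} {f' g' h' s : ℝ} (hf : HasDerivAt f f' s)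
    (hg : HasDerivAt g g' s) (hh : HasDerivAt h h' s) :
    HasDerivAt (fun a => ![f a, g a, h a]) ![f', g', h'] s := by
  refine hasDerivAt_pi.2 fun i => ?_
  fin_cases i <;> assumption

def ruledSurface (γ w : ℝ → Fin 3 → ℝ) (s t : ℝ) : Fin 3 → ℝ := γ s + t • w s

theorem mink_add_smul_left (a b c : Fin 3 → ℝ) (t : ℝ) :
    mink (a + t • b) c = mink a c + t * mink b c := by
  simp only [mink, Pi.add_apply, Pi.smul_apply, smul_eq_mul]
  ring

theorem disc_eq_coefE {X : ℝ → ℝ → Fin 3 → ℝ} {s t : ℝ} (hF : coefF X s t = 0)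
    (hG : coefG X s t = 1) : disc X s t = coefE X s t := by
  rw [disc, hF, hG]
  ring

theorem solitonEqAt_iff {X : ℝ → ℝ → Fin 3 → ℝ} {v : Fin 3 → ℝ} {s t : ℝ}
    (hF : coefF X s t = 0) (hG : coefG X s t = 1) (hTT : pTT X s t = 0) (hE : 0 < coefE X s t) :
    SolitonEqAt X v s t ↔
      det3 (pS X s t) (pT X s t) (pSS X s t) = -coefE X s t * det3 (pS X s t) (pT X s t) v := by
  rw [SolitonEqAt, disc_eq_coefE hF hG, abs_of_pos hE, hF, hG, hTT]
  have h0 : det3 (pS X s t) (pT X s t) 0 = 0 := by simp only [det3, Pi.zero_apply]; ring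
  simp only [h0, mul_zero, zero_mul, sub_zero, one_mul, zero_add]

section RuledSurface

theorem pT_ruledSurface (γ w : ℝ → Fin 3 → ℝ) (s t : ℝ) :
    pT (ruledSurface γ w) s t = w s :=
  ((((hasDerivAt_id t).smul_const (w s)).const_add (γ s)).congr_deriv (one_smul ℝ _)).deriv

theorem pTT_ruledSurface (γ w : ℝ → Fin 3 → ℝ) (s t : ℝ) :
    pTT (ruledSurface γ w) s t = 0 := by
  simp only [pTT, pT_ruledSurface, deriv_const]

variable {γ w : ℝ → Fin 3 → ℝ} {s t : ℝ}

theorem pS_ruledSurface {γ' w' : Fin 3 → ℝ} (hγ : HasDerivAt γ γ' s)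
    (hw : HasDerivAt w w' s) :
    pS (ruledSurface γ w) s t = γ' + t • w' :=
  (hγ.add (hw.const_smul t)).deriv

theorem pSS_ruledSurface {γ' w' : ℝ → Fin 3 → ℝ} {γ'' w'' : Fin 3 → ℝ}
    (hγ : ∀ a, HasDerivAt γ (γ' a) a) (hw : ∀ a, HasDerivAt w (w' a) a)
    (hγ' : HasDerivAt γ' γ'' s) (hw' : HasDerivAt w' w'' s) :
    pSS (ruledSurface γ w) s t = γ'' + t • w'' := by
  have hpS : (fun a => pS (ruledSurface γ w) a t) = fun a => γ' a + t • w' a :=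
    funext fun a => pS_ruledSurface (hγ a) (hw a)
  rw [pSS, hpS]
  exact (hγ'.add (hw'.const_smul t)).deriv

theorem coefF_ruledSurface {γ' w' : Fin 3 → ℝ} (hγ : HasDerivAt γ γ' s)
    (hw : HasDerivAt w w' s) :
    coefF (ruledSurface γ w) s t = mink γ' (w s) + t * mink w' (w s) := by
  rw [coefF, pS_ruledSurface hγ hw, pT_ruledSurface, mink_add_smul_left]

theorem coefG_ruledSurface : coefG (ruledSurface γ w) s t = mink (w s) (w s) := by
  rw [coefG, pT_ruledSurface]

theorem ruledSurface_disc_eq_coefE_and_solitonEqAt {γ' w' : ℝ → Fin 3 → ℝ}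
    {γ'' w'' v : Fin 3 → ℝ}
    (hγ : ∀ a, HasDerivAt γ (γ' a) a) (hw : ∀ a, HasDerivAt w (w' a) a)
    (hγ' : HasDerivAt γ' γ'' s) (hw' : HasDerivAt w' w'' s)
    (hγ'w : mink (γ' s) (w s) = 0) (hw'w : mink (w' s) (w s) = 0) (hww : mink (w s) (w s) = 1)
    (hE : 0 < coefE (ruledSurface γ w) s t)
    (hsol : det3 (γ' s + t • w' s) (w s) (γ'' + t • w'')
      = -mink (γ' s + t • w' s) (γ' s + t • w' s) * det3 (γ' s + t • w' s) (w s) v) :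
    disc (ruledSurface γ w) s t = coefE (ruledSurface γ w) s t ∧
      0 < disc (ruledSurface γ w) s t ∧ SolitonEqAt (ruledSurface γ w) v s t := by
  have hF : coefF (ruledSurface γ w) s t = 0 := by
    rw [coefF_ruledSurface (hγ s) (hw s), hγ'w, hw'w, mul_zero, add_zero]
  have hG : coefG (ruledSurface γ w) s t = 1 := by rw [coefG_ruledSurface, hww]
  have hdisc := disc_eq_coefE hF hG
  refine ⟨hdisc, hdisc ▸ hE, (solitonEqAt_iff hF hG (pTT_ruledSurface γ w s t) hE).2 ?_⟩
  rwa [coefE, pS_ruledSurface (hγ s) (hw s), pT_ruledSurface, pSS_ruledSurface hγ hw hγ' hw']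

end RuledSurface

section ArctanProfile

variable (v₂ b : ℝ)

def solitonCurve (s : ℝ) : Fin 3 → ℝ :=
  ![-(1 / 2) * log (1 + (s - v₂) ^ 2) - v₂ * arctan (s - v₂),
    (-(v₂ ^ 2 / 2) * arctan (s - v₂) - (v₂ / 2) * log (1 + (s - v₂) ^ 2) + b * s)
      + arctan (s - v₂),
    -(v₂ ^ 2 / 2) * arctan (s - v₂) - (v₂ / 2) * log (1 + (s - v₂) ^ 2) + b * s]

def solitonCurve' (s : ℝ) : Fin 3 → ℝ :=
  ![-s / (1 + (s - v₂) ^ 2),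
    b + (v₂ ^ 2 / 2 + 1 - v₂ * s) / (1 + (s - v₂) ^ 2),
    b + (v₂ ^ 2 / 2 - v₂ * s) / (1 + (s - v₂) ^ 2)]

def solitonCurve'' (s : ℝ) : Fin 3 → ℝ :=
  ![(s ^ 2 - v₂ ^ 2 - 1) / (1 + (s - v₂) ^ 2) ^ 2,
    (v₂ * (s ^ 2 - s * v₂ - 1) - 2 * (s - v₂)) / (1 + (s - v₂) ^ 2) ^ 2,
    v₂ * (s ^ 2 - s * v₂ - 1) / (1 + (s - v₂) ^ 2) ^ 2]

theorem hasDerivAt_solitonCurve (s : ℝ) :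
    HasDerivAt (solitonCurve v₂ b) (solitonCurve' v₂ b s) s := by
  have hD : 1 + (s - v₂) ^ 2 ≠ 0 := by positivity
  have hφ := (hasDerivAt_id s).sub_const v₂
  have hA := (hasDerivAt_arctan (s - v₂)).comp s hφ
  have hL := (hasDerivAt_log hD).comp s ((hφ.pow 2).const_add 1)
  have hZ := ((hA.const_mul (-(v₂ ^ 2 / 2))).sub (hL.const_mul (v₂ / 2))).add
    ((hasDerivAt_id s).const_mul b)
  refine HasDerivAt.vec3 (((hL.const_mul (-(1 / 2))).sub (hA.const_mul v₂)).congr_deriv ?_)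
    ((hZ.add hA).congr_deriv ?_) (hZ.congr_deriv ?_) <;>
  · simp only [id]
    field_simp
    ring

theorem hasDerivAt_solitonCurve' (s : ℝ) :
    HasDerivAt (solitonCurve' v₂ b) (solitonCurve'' v₂ s) s := by
  have hD : 1 + (s - v₂) ^ 2 ≠ 0 := by positivity
  have hDs := ((((hasDerivAt_id s).sub_const v₂).pow 2).const_add 1)
  have hquot (c : ℝ) := ((((hasDerivAt_id s).const_mul v₂).const_sub c).div hDs hD).const_add b
  refine HasDerivAt.vec3 (((hasDerivAt_id s).neg.div hDs hD).congr_deriv ?_)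
    ((hquot (v₂ ^ 2 / 2 + 1)).congr_deriv ?_) ((hquot (v₂ ^ 2 / 2)).congr_deriv ?_) <;>
  · simp only [id, Pi.pow_apply, Pi.neg_apply]
    field_simp
    ring

theorem mink_solitonCurve'_ruling_eq_zero (s : ℝ) :
    mink (solitonCurve' v₂ b s) ![1, s, s] = 0 := by
  have hD : 1 + (s - v₂) ^ 2 ≠ 0 := by positivity
  simp only [mink, solitonCurve', Matrix.cons_val_zero, Matrix.cons_val_one, Matrix.cons_val_two,
    Matrix.head_cons, Matrix.tail_cons]
  field_simp
  ring

-- The `t`-terms cancel because `Φ'' = -2φ·Φ'²`; what remains is the profile equation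
-- `s·x'' - z'' = φ·(s² - 1)/(1 + φ²)²`.
theorem det3_solitonCurve''_eq_neg_mink_mul_det3 (s t : ℝ) :
    det3 (solitonCurve' v₂ b s + t • ![0, 1, 1]) ![1, s, s] (solitonCurve'' v₂ s)
      = -mink (solitonCurve' v₂ b s + t • ![0, 1, 1])
          (solitonCurve' v₂ b s + t • ![0, 1, 1])
        * det3 (solitonCurve' v₂ b s + t • ![0, 1, 1]) ![1, s, s] ![1, v₂, v₂] := by
  have hD : 1 + (s - v₂) ^ 2 ≠ 0 := by positivity
  simp only [mink, det3, solitonCurve', solitonCurve'', Pi.add_apply, Pi.smul_apply, smul_eq_mul,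
    Matrix.cons_val_zero, Matrix.cons_val_one, Matrix.cons_val_two, Matrix.head_cons,
    Matrix.tail_cons]
  field_simp
  ring

end ArctanProfile

theorem hasDerivAt_ruling (s : ℝ) : HasDerivAt (fun a : ℝ => ![1, a, a]) ![0, 1, 1] s :=
  (hasDerivAt_const s 1).vec3 (hasDerivAt_id' s) (hasDerivAt_id' s)

/-- Theorem 4, case `v = (1,v₂,v₂)`, `ε = −1`, arctan branch, `a = −1`,
`p = 1`: with `φ(s) = s − v₂`, `Φ(s) = arctan φ`, `x(s) = −(1/2)log(1+φ²) − v₂·arctan φ`,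
`z(s) = −(v₂²/2)arctan φ − (v₂/2)log(1+φ²) + bs` and `γ = (x, z+Φ, z)`, the ruled surface
`X(s,t) = γ(s) + t(1,s,s)` satisfies `⟨γ',(1,s,s)⟩ = 0`, and at every `(s,t)` with
`E = ⟨X_s,X_s⟩ > 0` it is non-degenerate with `EG − F² = E > 0` and satisfies the
translating soliton equation with respect to `v = (1,v₂,v₂)`. -/
theorem stmt17 (v₂ b : ℝ) (Φ x z : ℝ → ℝ) (γ : ℝ → Fin 3 → ℝ)
    (hΦ : Φ = fun s => Real.arctan (s - v₂))
    (hx : x = fun s =>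
      -(1 / 2) * Real.log (1 + (s - v₂) ^ 2) - v₂ * Real.arctan (s - v₂))
    (hz : z = fun s =>
      -(v₂ ^ 2 / 2) * Real.arctan (s - v₂)
        - (v₂ / 2) * Real.log (1 + (s - v₂) ^ 2) + b * s)
    (hγ : γ = fun s => ![x s, z s + Φ s, z s]) :
    (∀ s : ℝ, mink (deriv γ s) ![1, s, s] = 0) ∧
    (∀ s t : ℝ,
      0 < coefE (fun s t => γ s + t • ![1, s, s]) s t →
        disc (fun s t => γ s + t • ![1, s, s]) s t
            = coefE (fun s t => γ s + t • ![1, s, s]) s t ∧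
        0 < disc (fun s t => γ s + t • ![1, s, s]) s t ∧
        SolitonEqAt (fun s t => γ s + t • ![1, s, s]) ![1, v₂, v₂] s t) := by
  obtain rfl : γ = solitonCurve v₂ b := by subst_vars; rfl
  refine ⟨fun s => ?_, fun s t hE => ?_⟩
  · rw [(hasDerivAt_solitonCurve v₂ b s).deriv]
    exact mink_solitonCurve'_ruling_eq_zero v₂ b s
  · refine ruledSurface_disc_eq_coefE_and_solitonEqAt (w := fun a => ![1, a, a])
      (hasDerivAt_solitonCurve v₂ b) hasDerivAt_ruling (hasDerivAt_solitonCurve' v₂ b s)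
      (hasDerivAt_const s _) (mink_solitonCurve'_ruling_eq_zero v₂ b s) ?_ ?_ hE ?_
    · simp [mink]
    · simp [mink]
    · simpa only [smul_zero, add_zero] using det3_solitonCurve''_eq_neg_mink_mul_det3 v₂ b s t
end
end
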